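/- arXiv:0801.2953 — 2 statements merged into one kernel-verified Lean document; each statement's English description precedes it below -/
import Mathlib

section
/- If M and N are alternal moulds, then the mould bracket [M, N] = M × N − N × M is alternal; that is, the alternal moulds form a Lie subalgebra under the mould product commutator. -/
/-- The shuffle product of two words, as a multiset of words (with multiplicity). -/
def shuffle {A : Type*} : List A → List A → Multiset (List A)
  | [], b => {b}
  | x :: a, [] => {x :: a}
  | x :: a, y :: b =>
      (shuffle a (y :: b)).map (x :: ·) + (shuffle (x :: a) b).map (y :: ·)
termination_by a b => a.length + b.length
decreasing_by all_goals simp [List.length_cons]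

/-- The mould product. -/
def mouldMul {A K : Type*} [Field K] (M N : List A → K) : List A → K := fun a =>
  ∑ i ∈ Finset.range (a.length + 1), M (a.take i) * N (a.drop i)

/-- A mould is alternal if it vanishes on the empty word and the sum of its values over any
shuffle of two nonempty words vanishes. -/
def Alternal {A K : Type*} [Field K] (M : List A → K) : Prop :=
  M [] = 0 ∧ ∀ a b : List A, a ≠ [] → b ≠ [] → ((shuffle a b).map M).sum = 0

lemma shuffle_nil_left {A : Type*} (b : List A) : shuffle [] b = {b} := by
  simp [shuffle]

lemma shuffle_nil_right {A : Type*} (a : List A) : shuffle a [] = {a} := by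
  cases a <;> simp [shuffle]

lemma shuffle_cons_cons {A : Type*} (x y : A) (a b : List A) :
    shuffle (x :: a) (y :: b) =
      (shuffle a (y :: b)).map (x :: ·) + (shuffle (x :: a) b).map (y :: ·) := by
  simp [shuffle]

/-- The splittings of a word into a prefix and suffix. -/
def spl {A : Type*} (c : List A) : Multiset (List A × List A) :=
  ((List.range (c.length + 1)).map (fun i => (c.take i, c.drop i)) : List _)

lemma spl_nil {A : Type*} : spl ([] : List A) = {([], [])} := by
  simp [spl]

lemma spl_cons {A : Type*} (x : A) (c : List A) :
    spl (x :: c) = ([], x :: c) ::ₘ (spl c).map (fun p => (x :: p.1, p.2)) := by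
  simp only [spl, List.length_cons]
  rw [List.range_succ_eq_map]
  simp [Function.comp_def]

lemma range_bind_succ {B : Type*} (n : ℕ) (f : ℕ → Multiset B) :
    (↑(List.range (n + 1)) : Multiset ℕ).bind f =
      f 0 + (↑(List.range n) : Multiset ℕ).bind (fun i => f (i + 1)) := by
  rw [List.range_succ_eq_map]
  rw [← Multiset.cons_coe, Multiset.cons_bind, ← Multiset.map_coe, Multiset.bind_map]

/-- Key combinatorial lemma: splitting the shuffles of `a` and `b` corresponds to
shuffling the pieces of splittings of `a` and `b`. -/
theorem split_shuffle {A : Type*} (a b : List A) :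
    (shuffle a b).bind spl =
      (↑(List.range (a.length + 1)) : Multiset ℕ).bind fun i =>
        (↑(List.range (b.length + 1)) : Multiset ℕ).bind fun j =>
          (shuffle (a.take i) (b.take j)).bind fun c1 =>
            (shuffle (a.drop i) (b.drop j)).map fun c2 => (c1, c2) := by
  induction a generalizing b with
  | nil =>
    simp [shuffle_nil_left, spl, Multiset.singleton_bind, Multiset.bind_singleton,
      Multiset.bind_map, show List.range 1 = [0] from rfl]
  | cons x a' iha =>
    induction b with
    | nil =>
      simp [shuffle_nil_right, spl, Multiset.singleton_bind, Multiset.bind_singleton,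
        Multiset.bind_map, show List.range 1 = [0] from rfl]
    | cons y b' ihb =>
      rw [shuffle_cons_cons, Multiset.add_bind, Multiset.bind_map, Multiset.bind_map]
      simp only [spl_cons, Multiset.bind_cons]
      rw [← Multiset.map_bind, ← Multiset.map_bind, iha (y :: b'), ihb]
      simp only [List.length_cons, range_bind_succ, List.take_zero, List.drop_zero,
        List.take_succ_cons, List.drop_succ_cons, shuffle_nil_left, shuffle_nil_right,
        shuffle_cons_cons, Multiset.singleton_bind, Multiset.bind_singleton,
        Multiset.add_bind, Multiset.bind_add, Multiset.map_add, Multiset.map_bind,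
        Multiset.bind_map, Multiset.map_map, Function.comp_def]
      abel

lemma listRangeSum {K : Type*} [AddCommMonoid K] (n : ℕ) (g : ℕ → K) :
    ((List.range n).map g).sum = ∑ i ∈ Finset.range n, g i := by
  induction n with
  | zero => simp
  | succ n ih => rw [List.range_succ, Finset.sum_range_succ, List.map_append]; simp [ih]

lemma sum_map_spl {A K : Type*} [Field K] (M N : List A → K) (c : List A) :
    ((spl c).map (fun p => M p.1 * N p.2)).sum = mouldMul M N c := by
  rw [mouldMul, ← listRangeSum]
  simp [spl, Multiset.map_coe, Function.comp_def]

lemma sum_shuffle_mouldMul {A K : Type*} [Field K] (M N : List A → K) (a b : List A) :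
    ((shuffle a b).map (mouldMul M N)).sum =
      ∑ i ∈ Finset.range (a.length + 1), ∑ j ∈ Finset.range (b.length + 1),
        ((shuffle (a.take i) (b.take j)).map M).sum *
          ((shuffle (a.drop i) (b.drop j)).map N).sum := by
  have h := congrArg (fun s : Multiset (List A × List A) =>
    (s.map fun p => M p.1 * N p.2).sum) (split_shuffle a b)
  simp only [Multiset.map_bind, Multiset.sum_bind, Multiset.map_map, Function.comp_def,
    Multiset.sum_map_mul_left, Multiset.sum_map_mul_right, sum_map_spl,
    Multiset.map_coe, Multiset.sum_coe, listRangeSum] at h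
  exact h

lemma sum_shuffle_mouldMul_eq {A K : Type*} [Field K] (M N : List A → K)
    (hM : Alternal M) (hN : Alternal N) (a b : List A) (ha : a ≠ []) (hb : b ≠ []) :
    ((shuffle a b).map (mouldMul M N)).sum = M a * N b + M b * N a := by
  rw [sum_shuffle_mouldMul]
  rw [← Finset.sum_product']
  have hn : a.length ≠ 0 := by simpa using ha
  have hm : b.length ≠ 0 := by simpa using hb
  have hne : ((a.length, 0) : ℕ × ℕ) ≠ (0, b.length) := by
    simp only [ne_eq, Prod.mk.injEq, not_and]
    intro h
    exact absurd h hn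
  have hsub : ({(a.length, 0), (0, b.length)} : Finset (ℕ × ℕ)) ⊆
      Finset.range (a.length + 1) ×ˢ Finset.range (b.length + 1) := by
    intro p hp
    simp only [Finset.mem_insert, Finset.mem_singleton] at hp
    rcases hp with h | h <;> subst h <;> simp [Finset.mem_product]
  rw [← Finset.sum_subset hsub]
  · rw [Finset.sum_pair hne]
    simp [List.take_length, List.drop_length, shuffle_nil_left, shuffle_nil_right]
  · intro p hp hnp
    simp only [Finset.mem_product, Finset.mem_range] at hp
    simp only [Finset.mem_insert, Finset.mem_singleton, not_or] at hnp
    obtain ⟨h1, h2⟩ := hnp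
    by_cases hi0 : p.1 = 0
    · have htake : (a.take p.1) = [] := by simp [hi0]
      by_cases hj : b.drop p.2 = []
      · exfalso
        apply h2
        have : b.length ≤ p.2 := List.drop_eq_nil_iff.mp hj
        have : p.2 = b.length := by omega
        exact Prod.ext hi0 this
      · rw [htake, shuffle_nil_left]
        have : ((shuffle (a.drop p.1) (b.drop p.2)).map N).sum = 0 := by
          apply hN.2
          · simp [hi0, ha]
          · exact hj
        rw [this, mul_zero]
    · by_cases hj0 : p.2 = 0
      · have hdropb : (b.drop p.2) = b := by simp [hj0]
        by_cases hi : a.drop p.1 = []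
        · exfalso
          apply h1
          have : a.length ≤ p.1 := List.drop_eq_nil_iff.mp hi
          have : p.1 = a.length := by omega
          exact Prod.ext this hj0
        · have : ((shuffle (a.drop p.1) (b.drop p.2)).map N).sum = 0 := hN.2 _ _ hi (by rw [hdropb]; exact hb)
          rw [this, mul_zero]
      · have : ((shuffle (a.take p.1) (b.take p.2)).map M).sum = 0 := by
          apply hM.2
          · simp [List.take_eq_nil_iff, hi0, ha]
          · simp [List.take_eq_nil_iff, hj0, hb]
        rw [this, zero_mul]

/-- the mould bracket `[M,N] = M × N − N × M` of two alternal moulds is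
alternal (alternal moulds form a Lie subalgebra). -/
theorem alternal_bracket {A K : Type*} [Field K] [CharZero K] (M N : List A → K)
    (hM : Alternal M) (hN : Alternal N) :
    Alternal (fun a => mouldMul M N a - mouldMul N M a) := by
  constructor
  · simp [mouldMul, hM.1, hN.1]
  · intro a b ha hb
    have : ((shuffle a b).map fun c => mouldMul M N c - mouldMul N M c).sum =
        ((shuffle a b).map (mouldMul M N)).sum - ((shuffle a b).map (mouldMul N M)).sum :=
      Multiset.sum_map_sub
    rw [this, sum_shuffle_mouldMul_eq M N hM hN a b ha hb,
      sum_shuffle_mouldMul_eq N M hN hM a b ha hb]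
    ring
end

section
/- If M and N are symetral moulds, then their mould product M × N is symetral; that is, symetral moulds are closed under the mould product. -/
/-- A mould is symetral if `Σ_{c ∈ a ш b} M^c = M^a M^b` for all words `a, b`. -/
def Symetral {A K : Type*} [Field K] (M : List A → K) : Prop :=
  ∀ a b : List A, ((shuffle a b).map M).sum = M a * M b

/-- The multiset of all deconcatenations of a word. -/
def splits {A : Type*} : List A → Multiset (List A × List A)
  | [] => {([], [])}
  | x :: c => ([], x :: c) ::ₘ (splits c).map (fun p => (x :: p.1, p.2))

lemma mouldMul_eq_splits {A K : Type*} [Field K] (M N : List A → K) (c : List A) :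
    mouldMul M N c = ((splits c).map (fun p => M p.1 * N p.2)).sum := by
  induction c generalizing M with
  | nil => simp [mouldMul, splits]
  | cons x c ih =>
    rw [mouldMul, List.length_cons, Finset.sum_range_succ']
    simp only [splits, Multiset.map_cons, Multiset.map_map, Multiset.sum_cons,
      Function.comp, List.take, List.drop]
    rw [add_comm, ← ih (fun l => M (x :: l)), mouldMul]

/-- Key combinatorial identity: deconcatenation is compatible with shuffle. -/
theorem key {A K : Type*} [CommRing K] :
    ∀ (f g : List A → K) (a b : List A),
    ((shuffle a b).map (fun c => ((splits c).map (fun p => f p.1 * g p.2)).sum)).sum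
    = ((splits a).map (fun p => ((splits b).map (fun q =>
        ((shuffle p.1 q.1).map f).sum * ((shuffle p.2 q.2).map g).sum)).sum)).sum
  | f, g, [], b => by
    simp [shuffle_nil_left, splits, Multiset.map_map, Function.comp]
  | f, g, x :: a, [] => by
    simp [shuffle_nil_right, splits, Multiset.map_map, Function.comp]
  | f, g, x :: a, y :: b => by
    have IH1 := key (fun c => f (x :: c)) g a (y :: b)
    have IH2 := key (fun c => f (y :: c)) g (x :: a) b
    simp only [shuffle, Multiset.map_add, Multiset.sum_add, Multiset.map_map, Function.comp,
      splits, Multiset.map_cons, Multiset.sum_cons, shuffle_nil_left, shuffle_nil_right,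
      Multiset.map_singleton, Multiset.sum_singleton, Multiset.sum_map_add,
      Multiset.sum_map_mul_left, Multiset.sum_map_mul_right, add_mul, mul_add] at IH1 IH2 ⊢
    rw [IH1, IH2]
    ring
termination_by f g a b => a.length + b.length

/-- the mould product of two symetral moulds is symetral. -/
theorem symetral_mul {A K : Type*} [Field K] (M N : List A → K)
    (hM : Symetral M) (hN : Symetral N) : Symetral (mouldMul M N) := by
  intro a b
  have h1 : ((shuffle a b).map (mouldMul M N)).sum
      = ((shuffle a b).map (fun c => ((splits c).map (fun p => M p.1 * N p.2)).sum)).sum := by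
    congr 1
    exact Multiset.map_congr rfl (fun c _ => mouldMul_eq_splits M N c)
  rw [h1, key M N a b, mouldMul_eq_splits, mouldMul_eq_splits]
  rw [← Multiset.sum_map_mul_right]
  refine congrArg Multiset.sum (Multiset.map_congr rfl fun p _ => ?_)
  rw [← Multiset.sum_map_mul_left]
  refine congrArg Multiset.sum (Multiset.map_congr rfl fun q _ => ?_)
  rw [hM p.1 q.1, hN p.2 q.2]
  ring
end
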